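/- arXiv:1409.1935 — 2 statements merged into one kernel-verified Lean document; each statement's English description precedes it below -/
import Mathlib

section
/- Let a < b, u ∈ H¹(a,b), and let Πu ∈ P_m[a,b] (polynomial of degree ≤ m, m ≥ 1) satisfy Πu(a) = u(a), Πu(b) = u(b), and ∫_a^b (Πu − u)(t) v(t) dt = 0 for all polynomials v of degree ≤ m−2 (for m = 1 take Πu the linear interpolant). Then ∫_a^b |(Πu)'(t)|² dt ≤ 2 ∫_a^b |u'(t)|² dt. -/
/-!
Integrating by parts, `∫ (u - Πu)' (Πu)' = -∫ (u - Πu) (Πu)''` because `Πu - u` vanishes at both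
endpoints, and the right-hand side is zero: for `m ≥ 2` by orthogonality against `(Πu)''`, of
degree `≤ m - 2`, and for `m ≤ 1` because `(Πu)'' = 0`. Hence `‖(Πu)'‖² = ⟪u', (Πu)'⟫`, and
Young's inequality `u' (Πu)' ≤ (u'² + (Πu)'²) / 2` gives even `‖(Πu)'‖² ≤ ‖u'‖²`.
-/

open MeasureTheory Polynomial

lemma intervalIntegrable_of_hasDerivAt_of_integrableOn_sq {a b : ℝ} (hab : a ≤ b)
    {u u' : ℝ → ℝ} (hderiv : ∀ t ∈ Set.Icc a b, HasDerivAt u (u' t) t)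
    (hu'2 : IntegrableOn (fun t => u' t ^ 2) (Set.Icc a b)) :
    IntervalIntegrable u' volume a b := by
  have hmeas : AEStronglyMeasurable u' (volume.restrict (Set.Icc a b)) := by
    refine (measurable_deriv u).aestronglyMeasurable.congr ?_
    rw [← Measure.restrict_congr_set Ioo_ae_eq_Icc]
    filter_upwards [ae_restrict_mem measurableSet_Ioo] with t ht
    exact (hderiv t (Set.Ioo_subset_Icc_self ht)).deriv
  rw [intervalIntegrable_iff_integrableOn_Icc_of_le hab]
  exact ((memLp_two_iff_integrable_sq hmeas).2 hu'2).integrable one_le_two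

lemma integral_derivative_sq_eq_of_eval_eq {a b : ℝ} {u u' : ℝ → ℝ} {p : ℝ[X]}
    (hderiv : ∀ t ∈ Set.uIcc a b, HasDerivAt u (u' t) t)
    (hu' : IntervalIntegrable u' volume a b) (ha : p.eval a = u a) (hb : p.eval b = u b) :
    ∫ t in a..b, (p.derivative.eval t) ^ 2 =
      (∫ t in a..b, u' t * p.derivative.eval t) -
        ∫ t in a..b, (p.eval t - u t) * (derivative^[2] p).eval t := by
  have hp' : Continuous fun t => p.derivative.eval t := p.derivative.continuous
  have hibp := intervalIntegral.integral_mul_deriv_eq_deriv_mul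
    (u := fun t => p.eval t - u t) (u' := fun t => p.derivative.eval t - u' t)
    (v' := fun t => (derivative^[2] p).eval t)
    (fun t ht => (p.hasDerivAt t).sub (hderiv t ht))
    (fun t _ => p.derivative.hasDerivAt t)
    (hp'.intervalIntegrable a b |>.sub hu') ((derivative^[2] p).continuous.intervalIntegrable a b)
  simp only [ha, hb, sub_self, zero_mul, zero_sub] at hibp
  rw [hibp, sub_neg_eq_add, ← intervalIntegral.integral_add
    (hu'.mul_continuousOn hp'.continuousOn)
    ((hp'.intervalIntegrable a b |>.sub hu').mul_continuousOn hp'.continuousOn)]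
  congr 1 with t
  ring

lemma integral_sub_mul_iterate_derivative_two_eq_zero {a b : ℝ} {m : ℕ} {u : ℝ → ℝ}
    {p : ℝ[X]} (hdeg : p.natDegree ≤ m)
    (horth : 2 ≤ m → ∀ q : ℝ[X], q.natDegree ≤ m - 2 →
      ∫ t in a..b, (p.eval t - u t) * q.eval t = 0) :
    ∫ t in a..b, (p.eval t - u t) * (derivative^[2] p).eval t = 0 := by
  by_cases hm : 2 ≤ m
  · exact horth hm _ ((natDegree_iterate_derivative p 2).trans (by omega))
  · simp [iterate_derivative_eq_zero (show p.natDegree < 2 by omega)]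

lemma integral_sq_le_of_integral_sq_eq_integral_mul {a b : ℝ} (hab : a ≤ b) {f g : ℝ → ℝ}
    (hf2 : IntervalIntegrable (fun t => f t ^ 2) volume a b)
    (hg2 : IntervalIntegrable (fun t => g t ^ 2) volume a b)
    (hfg : IntervalIntegrable (fun t => f t * g t) volume a b)
    (h : ∫ t in a..b, g t ^ 2 = ∫ t in a..b, f t * g t) :
    ∫ t in a..b, g t ^ 2 ≤ ∫ t in a..b, f t ^ 2 := by
  have young : ∫ t in a..b, f t * g t ≤ ∫ t in a..b, (f t ^ 2 / 2 + g t ^ 2 / 2) :=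
    intervalIntegral.integral_mono_on hab hfg ((hf2.div_const 2).add (hg2.div_const 2))
      fun t _ => by nlinarith [sq_nonneg (f t - g t)]
  rw [intervalIntegral.integral_add (hf2.div_const 2) (hg2.div_const 2),
    intervalIntegral.integral_div, intervalIntegral.integral_div] at young
  linarith

theorem projection_derivative_stability_general (a b : ℝ) (hab : a < b) (m : ℕ)
    (u u' : ℝ → ℝ)
    (hderiv : ∀ t ∈ Set.Icc a b, HasDerivAt u (u' t) t)
    (hu'2 : IntegrableOn (fun t => (u' t) ^ 2) (Set.Icc a b))
    (p : Polynomial ℝ) (hdeg : p.natDegree ≤ m)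
    (ha : p.eval a = u a) (hb : p.eval b = u b)
    (horth : 2 ≤ m → ∀ q : Polynomial ℝ, q.natDegree ≤ m - 2 →
      ∫ t in a..b, (p.eval t - u t) * q.eval t = 0) :
    ∫ t in a..b, (p.derivative.eval t) ^ 2 ≤ 2 * ∫ t in a..b, (u' t) ^ 2 := by
  have hu' := intervalIntegrable_of_hasDerivAt_of_integrableOn_sq hab.le hderiv hu'2
  have hp' : Continuous fun t => p.derivative.eval t := p.derivative.continuous
  have hpythagoras : ∫ t in a..b, (p.derivative.eval t) ^ 2 =
      ∫ t in a..b, u' t * p.derivative.eval t := by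
    rw [integral_derivative_sq_eq_of_eval_eq (by rwa [Set.uIcc_of_le hab.le]) hu' ha hb,
      integral_sub_mul_iterate_derivative_two_eq_zero hdeg horth, sub_zero]
  have hstable := integral_sq_le_of_integral_sq_eq_integral_mul hab.le
    ((intervalIntegrable_iff_integrableOn_Icc_of_le hab.le).2 hu'2)
    ((hp'.pow 2).intervalIntegrable a b) (hu'.mul_continuousOn hp'.continuousOn) hpythagoras
  have hnonneg : 0 ≤ ∫ t in a..b, (u' t) ^ 2 :=
    intervalIntegral.integral_nonneg hab.le fun t _ => sq_nonneg _
  linarith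

/-- L²-stability of the derivative of the degree-m projection. -/
theorem projection_derivative_stability (a b : ℝ) (hab : a < b) (m : ℕ) (hm : 1 ≤ m)
    (u u' : ℝ → ℝ)
    (hderiv : ∀ t ∈ Set.Icc a b, HasDerivAt u (u' t) t)
    (hu'2 : IntegrableOn (fun t => (u' t) ^ 2) (Set.Icc a b))
    (p : Polynomial ℝ) (hdeg : p.natDegree ≤ m)
    (ha : p.eval a = u a) (hb : p.eval b = u b)
    (horth : 2 ≤ m → ∀ q : Polynomial ℝ, q.natDegree ≤ m - 2 →
      ∫ t in a..b, (p.eval t - u t) * q.eval t = 0) :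
    ∫ t in a..b, (p.derivative.eval t) ^ 2 ≤ 2 * ∫ t in a..b, (u' t) ^ 2 :=
  projection_derivative_stability_general a b hab m u u' hderiv hu'2 p hdeg ha hb horth
end

section
/- Let γ ≥ 1, m ≥ 1, 0 < α < 1, and σ ∈ ((1−α)/2, 1) with γ ≥ (2m+1+α)/(2σ+α−1). Let T > 0, N ≥ 1, k = T^{1/γ}/N ≤ 1, and t_j = (jk)^γ, k_j = t_j − t_{j−1}. Suppose E_j ≥ 0 satisfies E_j ≤ C₁ k_j^{2m+1} t_j^{2(σ−m−1)} for 2 ≤ j ≤ N. Then k_j^{α} E_j ≤ C k^{2m+1+α} for all 2 ≤ j ≤ N, where C depends only on C₁, γ, α, σ, m, T. -/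
open Real

lemma rpow_mvt_aux {a b γ : ℝ} (ha : 0 ≤ a) (hab : a ≤ b) (hγ : 1 ≤ γ) :
    b ^ γ - a ^ γ ≤ γ * b ^ (γ - 1) * (b - a) := by
  have hderiv : ∀ x ∈ Set.Icc a b, HasDerivWithinAt (fun y : ℝ => y ^ γ)
      ((fun y : ℝ => γ * y ^ (γ - 1)) x) (Set.Icc a b) x := fun x _ =>
    (Real.hasDerivAt_rpow_const (Or.inr hγ)).hasDerivWithinAt
  have bound : ∀ x ∈ Set.Icc a b, ‖γ * x ^ (γ - 1)‖ ≤ γ * b ^ (γ - 1) := by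
    intro x hx
    have hx0 : 0 ≤ x := ha.trans hx.1
    have h1 : x ^ (γ - 1) ≤ b ^ (γ - 1) :=
      Real.rpow_le_rpow hx0 hx.2 (by linarith)
    have h2 : 0 ≤ γ * x ^ (γ - 1) := by positivity
    rw [Real.norm_eq_abs, abs_of_nonneg h2]
    exact mul_le_mul_of_nonneg_left h1 (by linarith)
  have key := Convex.norm_image_sub_le_of_norm_hasDerivWithin_le hderiv bound
    (convex_Icc a b) (Set.left_mem_Icc.2 hab) (Set.right_mem_Icc.2 hab)
  rw [Real.norm_eq_abs, Real.norm_eq_abs, abs_of_nonneg (by linarith : (0:ℝ) ≤ b - a)] at key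
  calc b ^ γ - a ^ γ ≤ |b ^ γ - a ^ γ| := le_abs_self _
    _ ≤ γ * b ^ (γ - 1) * (b - a) := key

/-- Graded-mesh estimate (4.9): `k_j^α E_j ≤ C k^{2m+1+α}`. -/
theorem graded_mesh_estimate_eta (γ α σ T C₁ : ℝ) (m : ℕ) (hm : 1 ≤ m)
    (hγ : 1 ≤ γ) (hα0 : 0 < α) (hα1 : α < 1)
    (hσl : (1 - α) / 2 < σ) (hσu : σ < 1)
    (hgrad : (2 * m + 1 + α) / (2 * σ + α - 1) ≤ γ)
    (hT : 0 < T) (hC₁ : 0 < C₁) :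
    ∃ C > 0, ∀ (N : ℕ), 1 ≤ N → ∀ k : ℝ, k = T ^ (1/γ) / N → k ≤ 1 →
      ∀ t : ℕ → ℝ, (∀ j, t j = ((j : ℝ) * k) ^ γ) →
      ∀ E : ℕ → ℝ, (∀ j, 0 ≤ E j) →
      (∀ j, 2 ≤ j → j ≤ N →
        E j ≤ C₁ * (t j - t (j - 1)) ^ (2 * (m:ℝ) + 1) * (t j) ^ (2 * (σ - m - 1))) →
      ∀ j, 2 ≤ j → j ≤ N →
        (t j - t (j - 1)) ^ α * E j ≤ C * k ^ (2 * (m:ℝ) + 1 + α) := by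
  have hγ0 : 0 < γ := lt_of_lt_of_le one_pos hγ
  set p : ℝ := 2 * (m:ℝ) + 1 + α with hp_def
  have hm1 : (1:ℝ) ≤ (m:ℝ) := by exact_mod_cast hm
  have hp0 : 0 < p := by positivity
  have hD0 : 0 < 2 * σ + α - 1 := by linarith
  set e : ℝ := 2 * σ + α - 1 - p / γ with he_def
  have he0 : 0 ≤ e := by
    have h1 : p ≤ γ * (2 * σ + α - 1) := by
      rw [div_le_iff₀ hD0] at hgrad
      calc p = 2 * m + 1 + α := rfl
        _ ≤ γ * (2 * σ + α - 1) := hgrad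
    have h2 : p / γ ≤ 2 * σ + α - 1 := by
      rw [div_le_iff₀ hγ0]; linarith
    rw [he_def]; linarith
  refine ⟨C₁ * γ ^ p * T ^ e, by positivity, ?_⟩
  intro N hN k hk hk1 t ht E hE hbd j hj2 hjN
  have hN0 : (0:ℝ) < N := by exact_mod_cast hN
  have hk0 : 0 < k := by
    rw [hk]; exact div_pos (Real.rpow_pos_of_pos hT _) hN0
  have hj1 : 1 ≤ j := le_trans (by norm_num) hj2
  have hcast : ((j - 1 : ℕ) : ℝ) = (j : ℝ) - 1 := by
    rw [Nat.cast_sub hj1]; norm_num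
  set b : ℝ := (j : ℝ) * k with hb_def
  have hjR : (2:ℝ) ≤ (j:ℝ) := by exact_mod_cast hj2
  have hb0 : 0 < b := by positivity
  have ha0 : 0 ≤ ((j:ℝ) - 1) * k := by nlinarith
  have hab : ((j:ℝ) - 1) * k < b := by rw [hb_def]; nlinarith
  have htj : t j = b ^ γ := ht j
  have htj1 : t (j - 1) = (((j:ℝ) - 1) * k) ^ γ := by rw [ht (j-1), hcast]
  have hkj_pos : 0 < t j - t (j - 1) := by
    rw [htj, htj1]
    exact sub_pos.2 (Real.rpow_lt_rpow ha0 hab hγ0)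
  have hkj_le : t j - t (j - 1) ≤ γ * b ^ (γ - 1) * k := by
    rw [htj, htj1]
    have h := rpow_mvt_aux ha0 hab.le hγ
    have hsub : b - ((j:ℝ) - 1) * k = k := by rw [hb_def]; ring
    rwa [hsub] at h
  have htjT : b ^ γ ≤ T := by
    have hble : b ≤ T ^ (1/γ) := by
      have hjN' : (j:ℝ) ≤ (N:ℝ) := by exact_mod_cast hjN
      have h1 : b ≤ (N:ℝ) * k := by rw [hb_def]; nlinarith
      have h2 : (N:ℝ) * k = T ^ (1/γ) := by rw [hk]; field_simp
      linarith
    calc b ^ γ ≤ (T ^ (1/γ)) ^ γ := Real.rpow_le_rpow hb0.le hble hγ0.le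
      _ = T := by
        rw [← Real.rpow_mul hT.le, one_div_mul_cancel (ne_of_gt hγ0), Real.rpow_one]
  have hts0 : 0 ≤ t j ^ (2 * (σ - (m:ℝ) - 1)) := by
    rw [htj]; exact Real.rpow_nonneg (Real.rpow_nonneg hb0.le γ) _
  calc (t j - t (j - 1)) ^ α * E j
      ≤ (t j - t (j - 1)) ^ α *
          (C₁ * (t j - t (j - 1)) ^ (2 * (m:ℝ) + 1) * (t j) ^ (2 * (σ - m - 1))) :=
        mul_le_mul_of_nonneg_left (hbd j hj2 hjN) (Real.rpow_nonneg hkj_pos.le α)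
    _ = C₁ * ((t j - t (j - 1)) ^ (2 * (m:ℝ) + 1) * (t j - t (j - 1)) ^ α) *
          (t j) ^ (2 * (σ - (m:ℝ) - 1)) := by ring
    _ = C₁ * (t j - t (j - 1)) ^ p * (t j) ^ (2 * (σ - (m:ℝ) - 1)) := by
        rw [hp_def, Real.rpow_add hkj_pos (2 * (m:ℝ) + 1) α]
    _ ≤ C₁ * (γ * b ^ (γ - 1) * k) ^ p * (t j) ^ (2 * (σ - (m:ℝ) - 1)) := by
        apply mul_le_mul_of_nonneg_right _ hts0
        exact mul_le_mul_of_nonneg_left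
          (Real.rpow_le_rpow hkj_pos.le hkj_le hp0.le) hC₁.le
    _ = C₁ * γ ^ p * k ^ p * (b ^ ((γ - 1) * p) * b ^ (γ * (2 * (σ - (m:ℝ) - 1)))) := by
        rw [htj, Real.mul_rpow (by positivity) hk0.le,
          Real.mul_rpow hγ0.le (Real.rpow_nonneg hb0.le _),
          ← Real.rpow_mul hb0.le, ← Real.rpow_mul hb0.le]
        ring
    _ = C₁ * γ ^ p * k ^ p * (b ^ γ) ^ e := by
        have hexp : (γ - 1) * p + γ * (2 * (σ - (m:ℝ) - 1)) = γ * e := by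
          rw [he_def, hp_def]; field_simp; ring
        rw [← Real.rpow_add hb0, hexp, Real.rpow_mul hb0.le]
    _ ≤ C₁ * γ ^ p * k ^ p * T ^ e := by
        apply mul_le_mul_of_nonneg_left
          (Real.rpow_le_rpow (Real.rpow_nonneg hb0.le γ) htjT he0) (by positivity)
    _ = C₁ * γ ^ p * T ^ e * k ^ p := by ring
end
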